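/- arXiv:2404.09549 — 4 statements merged into one kernel-verified Lean document; each statement's English description precedes it below -/
import Mathlib

section
/- Fix p ≥ 1. There exists a constant γ_p > 0 such that the following holds: for any (finite or countably infinite) sequence (ξ_i) of independent Bernoulli random variables, if S = Σ_i ξ_i has finite expectation, then E[|S − E[S]|^p] ≤ γ_p (Var(S)^{p/2} + 1). -/
/-!
For a centred variable `X` with `|X| ≤ 1`, the bound `e^u ≤ 1 + u + u²` on `[-1, 1]` gives
`E e^{tX} ≤ exp (t² Var X)` for `|t| ≤ 1`, and independence multiplies these bounds over a finite
family. Since `|z|^p ≤ (p/e)^p M^p (e^{z/M} + e^{-z/M})`, the choice `M = max 1 √v` turns this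
into `E |T|^p ≤ 2e (p/e)^p (v^{p/2} + 1)` for every finite centred sum `T` of variance `v`.

If `∑ E ξ_i < ∞`, the centred partial sums converge a.s. to `S - E S`, dominated by `S + E S`;
so their variances converge to `Var S`, and Fatou's lemma carries the bound to the limit.
If `∑ E ξ_i = ∞`, the second Borel–Cantelli lemma makes infinitely many `ξ_i` equal to `1`
almost surely; the series then diverges, so the `tsum` defining `S` is `0` almost surely.
-/

open MeasureTheory ProbabilityTheory ENNReal
open Filter Topology Real

lemma exp_le_one_add_add_sq {u : ℝ} (hu : |u| ≤ 1) : exp u ≤ 1 + u + u ^ 2 := by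
  linarith [(abs_le.1 (abs_exp_sub_one_sub_id_le hu)).2]

lemma rpow_le_div_exp_one_rpow_mul_exp {p y : ℝ} (hp : 0 < p) (hy : 0 ≤ y) :
    y ^ p ≤ (p / exp 1) ^ p * exp y := by
  rcases hy.eq_or_lt with rfl | hy
  · rw [zero_rpow hp.ne']
    positivity
  rw [rpow_def_of_pos hy, rpow_def_of_pos (by positivity), ← exp_add, exp_le_exp,
    log_div hp.ne' (exp_pos 1).ne', log_exp]
  have h := mul_le_mul_of_nonneg_right (log_le_sub_one_of_pos (div_pos hy hp)) hp.le
  rw [log_div hy.ne' hp.ne', sub_mul, sub_mul, div_mul_cancel₀ _ hp.ne'] at h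
  linarith

lemma abs_rpow_le_mul_exp_add_exp {p M : ℝ} (hp : 0 < p) (hM : 0 < M) (z : ℝ) :
    |z| ^ p ≤ (p / exp 1) ^ p * M ^ p * (exp (M⁻¹ * z) + exp (-M⁻¹ * z)) := by
  have hscaled := rpow_le_div_exp_one_rpow_mul_exp hp (by positivity : 0 ≤ M⁻¹ * |z|)
  have hexp : exp (M⁻¹ * |z|) ≤ exp (M⁻¹ * z) + exp (-M⁻¹ * z) := by
    rcases abs_cases z with ⟨h, _⟩ | ⟨h, _⟩ <;> rw [h]
    · linarith [exp_pos (-M⁻¹ * z)]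
    · rw [neg_mul, ← mul_neg]
      linarith [exp_pos (M⁻¹ * z)]
  calc |z| ^ p = M ^ p * (M⁻¹ * |z|) ^ p := by
        rw [mul_rpow (by positivity) (abs_nonneg z), ← mul_assoc, ← mul_rpow hM.le (by positivity),
          mul_inv_cancel₀ hM.ne', Real.one_rpow, one_mul]
    _ ≤ M ^ p * ((p / exp 1) ^ p * (exp (M⁻¹ * z) + exp (-M⁻¹ * z))) := by
        gcongr
        exact hscaled.trans (by gcongr)
    _ = _ := by ring

-- `(p / e) ^ p = sup_{y ≥ 0} y ^ p e ^ (-y)`, and `2 e` bounds `E e^{Y/M} + E e^{-Y/M}`.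
noncomputable def momentConst (p : ℝ) : ℝ := 2 * exp 1 * (p / exp 1) ^ p

lemma momentConst_pos {p : ℝ} (hp : 0 < p) : 0 < momentConst p := by
  unfold momentConst; positivity

lemma max_one_sqrt_rpow_le {v : ℝ} (hv : 0 ≤ v) (p : ℝ) :
    max 1 √v ^ p ≤ v ^ (p / 2) + 1 := by
  rcases le_total 1 √v with h | h
  · rw [max_eq_right h, sqrt_eq_rpow, ← rpow_mul hv, one_div_mul_eq_div]
    linarith
  · rw [max_eq_left h, Real.one_rpow]
    linarith [rpow_nonneg hv (p / 2)]

section Lintegral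

variable {Ω : Type*} [MeasurableSpace Ω] {μ : Measure Ω}

lemma lintegral_abs_rpow_le_of_lintegral_exp_le {Y : Ω → ℝ} (hY : AEMeasurable Y μ) {p v : ℝ}
    (hp : 0 < p) (hv : 0 ≤ v)
    (hexp : ∀ t, |t| ≤ 1 → ∫⁻ ω, .ofReal (exp (t * Y ω)) ∂μ ≤ .ofReal (exp (t ^ 2 * v))) :
    ∫⁻ ω, .ofReal (|Y ω| ^ p) ∂μ ≤ .ofReal (momentConst p) * (.ofReal v ^ (p / 2) + 1) := by
  set M := max 1 √v
  have hM1 : 1 ≤ M := le_max_left _ _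
  have hM : 0 < M := one_pos.trans_le hM1
  have hv_le : v ≤ M ^ 2 := by
    rw [← sq_sqrt hv]
    exact pow_le_pow_left₀ (sqrt_nonneg v) (le_max_right _ _) 2
  have hexp_le : ∀ t, |t| = M⁻¹ → ∫⁻ ω, .ofReal (exp (t * Y ω)) ∂μ ≤ .ofReal (exp 1) := by
    intro t ht
    refine (hexp t (ht ▸ inv_le_one_of_one_le₀ hM1)).trans (ofReal_le_ofReal (exp_le_exp.2 ?_))
    rw [← sq_abs, ht, inv_pow, inv_mul_le_iff₀ (by positivity), mul_one]
    exact hv_le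
  have hc : 0 ≤ (p / exp 1) ^ p * M ^ p := by positivity
  calc ∫⁻ ω, .ofReal (|Y ω| ^ p) ∂μ
      ≤ ∫⁻ ω, .ofReal ((p / exp 1) ^ p * M ^ p) *
          (.ofReal (exp (M⁻¹ * Y ω)) + .ofReal (exp (-M⁻¹ * Y ω))) ∂μ := by
        refine lintegral_mono fun ω => ?_
        rw [← ofReal_add (exp_pos _).le (exp_pos _).le, ← ofReal_mul hc]
        exact ofReal_le_ofReal (abs_rpow_le_mul_exp_add_exp hp hM _)
    _ = .ofReal ((p / exp 1) ^ p * M ^ p) * (∫⁻ ω, .ofReal (exp (M⁻¹ * Y ω)) ∂μ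
          + ∫⁻ ω, .ofReal (exp (-M⁻¹ * Y ω)) ∂μ) := by
        rw [lintegral_const_mul' _ _ ofReal_ne_top, lintegral_add_left' (by fun_prop)]
    _ ≤ .ofReal ((p / exp 1) ^ p * M ^ p) * (.ofReal (exp 1) + .ofReal (exp 1)) := by
        gcongr <;> apply hexp_le <;> simp [abs_of_pos hM]
    _ = .ofReal (momentConst p * M ^ p) := by
        rw [← ofReal_add (exp_pos 1).le (exp_pos 1).le, ← ofReal_mul hc, momentConst]
        ring_nf
    _ ≤ .ofReal (momentConst p * (v ^ (p / 2) + 1)) :=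
        ofReal_le_ofReal (by gcongr; exacts [(momentConst_pos hp).le, max_one_sqrt_rpow_le hv p])
    _ = .ofReal (momentConst p) * (.ofReal v ^ (p / 2) + 1) := by
        rw [ofReal_mul (momentConst_pos hp).le, ofReal_add (by positivity) zero_le_one,
          ofReal_rpow_of_nonneg hv (by positivity), ofReal_one]

lemma lintegral_le_of_tendsto_ae {f : ℕ → Ω → ℝ≥0∞} {g : Ω → ℝ≥0∞} {c : ℕ → ℝ≥0∞} {C : ℝ≥0∞}
    (hf : ∀ n, AEMeasurable (f n) μ) (hfg : ∀ᵐ ω ∂μ, Tendsto (f · ω) atTop (𝓝 (g ω)))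
    (hfc : ∀ n, ∫⁻ ω, f n ω ∂μ ≤ c n) (hc : Tendsto c atTop (𝓝 C)) :
    ∫⁻ ω, g ω ∂μ ≤ C :=
  calc ∫⁻ ω, g ω ∂μ = ∫⁻ ω, liminf (f · ω) atTop ∂μ :=
        lintegral_congr_ae (hfg.mono fun _ h => h.liminf_eq.symm)
    _ ≤ liminf (fun n => ∫⁻ ω, f n ω ∂μ) atTop := lintegral_liminf_le' hf
    _ ≤ liminf c atTop := liminf_le_liminf (.of_forall hfc)
    _ = C := hc.liminf_eq

lemma lintegral_enorm_eq_measure_preimage_one {f : Ω → ℝ} (hf : Measurable f)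
    (h01 : ∀ ω, f ω = 0 ∨ f ω = 1) :
    ∫⁻ ω, ‖f ω‖ₑ ∂μ = μ (f ⁻¹' {1}) := by
  rw [← lintegral_indicator_one (hf (measurableSet_singleton 1))]
  congr with ω
  rcases h01 ω with h | h <;> simp [h]

end Lintegral

namespace ProbabilityTheory

variable {Ω : Type*} [MeasurableSpace Ω] {μ : Measure Ω} {ι : Type*}

lemma iIndepFun.iIndepSet_preimage {β : Type*} [MeasurableSpace β] {f : ι → Ω → β}
    (hf : iIndepFun f μ) (hfm : ∀ i, Measurable (f i)) {A : ι → Set β}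
    (hA : ∀ i, MeasurableSet (A i)) : iIndepSet (fun i => f i ⁻¹' A i) μ :=
  (iIndepSet_iff_meas_biInter fun i => hfm i (hA i)).2 fun _ =>
    hf.meas_biInter fun i _ => ⟨A i, hA i, rfl⟩

lemma iIndepSet.ae_infinite_setOf_mem [Countable ι] {s : ι → Set Ω} (hsm : ∀ i, MeasurableSet (s i))
    (hs : iIndepSet s μ) (hs' : ∑' i, μ (s i) = ∞) : ∀ᵐ ω ∂μ, {i | ω ∈ s i}.Infinite := by
  have := hs.isProbabilityMeasure
  have : Infinite ι := by
    refine not_finite_iff_infinite.1 fun _ => ?_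
    have := Fintype.ofFinite ι
    rw [tsum_fintype] at hs'
    exact ENNReal.sum_ne_top.2 (fun i _ => measure_ne_top μ (s i)) hs'
  have := Encodable.ofCountable ι
  have := Denumerable.ofEncodableOfInfinite ι
  set e : ℕ ≃ ι := (Denumerable.eqv ι).symm
  have hlimsup := measure_limsup_eq_one (fun n => hsm (e n)) (hs.precomp e.injective)
    (by rwa [e.tsum_eq (fun i => μ (s i))])
  have hae : ∀ᵐ ω ∂μ, ω ∈ limsup (fun n => s (e n)) atTop :=
    (ae_iff_measure_eq (MeasurableSet.measurableSet_limsup fun n => hsm (e n)).nullMeasurableSet).2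
      (hlimsup.trans measure_univ.symm)
  filter_upwards [hae] with ω hω
  have hinf := Nat.frequently_atTop_iff_infinite.1 (mem_limsup_iff_frequently_mem.1 hω)
  exact (hinf.image e.injective.injOn).mono (by rintro _ ⟨n, hn, rfl⟩; exact hn)

lemma iIndepFun.ae_not_summable_of_tsum_measure_eq_top [Countable ι] {ξ : ι → Ω → ℝ}
    (hind : iIndepFun ξ μ) (hξ : ∀ i, Measurable (ξ i)) (htop : ∑' i, μ (ξ i ⁻¹' {1}) = ∞) :
    ∀ᵐ ω ∂μ, ¬ Summable (ξ · ω) := by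
  have hsets := hind.iIndepSet_preimage hξ fun _ => measurableSet_singleton 1
  filter_upwards [hsets.ae_infinite_setOf_mem (fun i => hξ i (measurableSet_singleton 1)) htop]
    with ω hinf hsum
  have hfin := eventually_cofinite.1 (hsum.tendsto_cofinite_zero.eventually (gt_mem_nhds one_pos))
  exact hinf (hfin.subset fun i (hi : ξ i ω = 1) => by simp [hi])

variable [IsProbabilityMeasure μ]

lemma mgf_le_exp_sq_mul_variance {X : Ω → ℝ} (hX : AEMeasurable X μ)
    (hb : ∀ᵐ ω ∂μ, |X ω| ≤ 1) (h0 : μ[X] = 0) {t : ℝ} (ht : |t| ≤ 1) :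
    mgf X μ t ≤ exp (t ^ 2 * Var[X; μ]) := by
  have hX_int : Integrable X μ := .of_mem_Icc (-1) 1 hX (hb.mono fun ω h => abs_le.1 h)
  have hX2_int : Integrable (fun ω => X ω ^ 2) μ := .of_mem_Icc 0 1 (hX.pow_const 2)
    (hb.mono fun ω h => ⟨sq_nonneg _, (sq_le_one_iff_abs_le_one _).2 h⟩)
  rw [variance_of_integral_eq_zero hX h0]
  calc mgf X μ t ≤ ∫ ω, (1 + t * X ω + t ^ 2 * X ω ^ 2) ∂μ := by
        refine integral_mono_ae (integrable_exp_mul_of_mem_Icc hX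
          (hb.mono fun ω h => abs_le.1 h)) (by fun_prop) ?_
        filter_upwards [hb] with ω h
        have htX : |t * X ω| ≤ 1 := by
          rw [abs_mul]
          exact mul_le_one₀ ht (abs_nonneg _) h
        simpa [mul_pow] using exp_le_one_add_add_sq htX
    _ = t ^ 2 * ∫ ω, X ω ^ 2 ∂μ + 1 := by
        rw [integral_add (by fun_prop) (hX2_int.const_mul _), integral_add (by fun_prop)
          (hX_int.const_mul _), integral_const_mul, integral_const_mul, h0]
        simp only [integral_const, probReal_univ, smul_eq_mul, mul_one, mul_zero, add_zero]
        ring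
    _ ≤ _ := by simpa using add_one_le_exp (t ^ 2 * ∫ ω, X ω ^ 2 ∂μ)

lemma iIndepFun.lintegral_abs_sum_rpow_le {X : ι → Ω → ℝ} (hind : iIndepFun X μ)
    (hX : ∀ i, Measurable (X i)) (hb : ∀ i ω, |X i ω| ≤ 1) (h0 : ∀ i, μ[X i] = 0) {p : ℝ}
    (hp : 0 < p) (s : Finset ι) :
    ∫⁻ ω, .ofReal (|∑ i ∈ s, X i ω| ^ p) ∂μ
      ≤ .ofReal (momentConst p) * (.ofReal Var[∑ i ∈ s, X i; μ] ^ (p / 2) + 1) := by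
  have hX_mem : ∀ i ω, X i ω ∈ Set.Icc (-1) 1 := fun i ω => abs_le.1 (hb i ω)
  have hvar : Var[∑ i ∈ s, X i; μ] = ∑ i ∈ s, Var[X i; μ] :=
    IndepFun.variance_sum (fun i _ => memLp_of_bounded (ae_of_all _ (hX_mem i))
      (hX i).aestronglyMeasurable 2) fun i _ j _ hij => hind.indepFun hij
  refine lintegral_abs_rpow_le_of_lintegral_exp_le (by fun_prop) hp (variance_nonneg _ _)
    fun t ht => ?_
  have hint : Integrable (fun ω => exp (t * (∑ i ∈ s, X i) ω)) μ :=
    hind.integrable_exp_mul_sum hX fun i _ =>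
      integrable_exp_mul_of_mem_Icc (hX i).aemeasurable (ae_of_all _ (hX_mem i))
  have hmgf : mgf (∑ i ∈ s, X i) μ t ≤ exp (t ^ 2 * Var[∑ i ∈ s, X i; μ]) := by
    rw [hind.mgf_sum hX, hvar, Finset.mul_sum, exp_sum]
    exact Finset.prod_le_prod (fun i _ => mgf_nonneg) fun i _ =>
      mgf_le_exp_sq_mul_variance (hX i).aemeasurable (ae_of_all _ (hb i)) (h0 i) ht
  rw [← ofReal_integral_eq_lintegral_ofReal (by simpa using hint)
    (ae_of_all _ fun _ => (exp_pos _).le)]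
  exact ofReal_le_ofReal (by simpa [mgf] using hmgf)

lemma tendsto_variance_of_dominated {X : ℕ → Ω → ℝ} {Y g : Ω → ℝ}
    (hX : ∀ n, AEStronglyMeasurable (X n) μ) (hg : MemLp g 2 μ)
    (hXg : ∀ n, ∀ᵐ ω ∂μ, |X n ω| ≤ g ω) (hXY : ∀ᵐ ω ∂μ, Tendsto (X · ω) atTop (𝓝 (Y ω))) :
    Tendsto (fun n => Var[X n; μ]) atTop (𝓝 Var[Y; μ]) := by
  have hY : AEStronglyMeasurable Y μ := aestronglyMeasurable_of_tendsto_ae atTop hX hXY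
  have hYg : ∀ᵐ ω ∂μ, |Y ω| ≤ g ω := by
    filter_upwards [hXY, ae_all_iff.2 hXg] with ω hlim hle
    exact le_of_tendsto' hlim.abs hle
  have hL2 : ∀ {Z : Ω → ℝ}, AEStronglyMeasurable Z μ → (∀ᵐ ω ∂μ, |Z ω| ≤ g ω) → MemLp Z 2 μ :=
    fun hZ hZg => hg.of_le hZ (hZg.mono fun ω h => h.trans (le_abs_self _))
  have hmean : Tendsto (fun n => μ[X n]) atTop (𝓝 μ[Y]) :=
    tendsto_integral_of_dominated_convergence g hX (hg.integrable one_le_two) hXg hXY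
  have hsq : Tendsto (fun n => μ[X n ^ 2]) atTop (𝓝 μ[Y ^ 2]) := by
    refine tendsto_integral_of_dominated_convergence (g ^ 2) (fun n => (hX n).pow 2)
      hg.integrable_sq (fun n => (hXg n).mono fun ω h => ?_) (hXY.mono fun ω h => h.pow 2)
    simpa [sq_abs] using pow_le_pow_left₀ (abs_nonneg _) h 2
  rw [variance_eq_sub (hL2 hY hYg)]
  simpa only [variance_eq_sub (hL2 (hX _) (hXg _))] using hsq.sub (hmean.pow 2)

lemma lintegral_abs_rpow_le_of_tendsto_of_dominated {X : ℕ → Ω → ℝ} {Y g : Ω → ℝ} {p C : ℝ}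
    (hp : 0 < p) (hX : ∀ n, AEStronglyMeasurable (X n) μ) (hg : MemLp g 2 μ)
    (hXg : ∀ n, ∀ᵐ ω ∂μ, |X n ω| ≤ g ω) (hXY : ∀ᵐ ω ∂μ, Tendsto (X · ω) atTop (𝓝 (Y ω)))
    (hX_moment : ∀ n, ∫⁻ ω, .ofReal (|X n ω| ^ p) ∂μ
      ≤ .ofReal C * (.ofReal Var[X n; μ] ^ (p / 2) + 1)) :
    ∫⁻ ω, .ofReal (|Y ω| ^ p) ∂μ ≤ .ofReal C * (.ofReal Var[Y; μ] ^ (p / 2) + 1) := by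
  have hcont_moment : Continuous fun x : ℝ => ENNReal.ofReal (|x| ^ p) :=
    ENNReal.continuous_ofReal.comp (continuous_abs.rpow_const fun _ => Or.inr hp.le)
  have hcont_bound : Continuous fun v : ℝ => ENNReal.ofReal C * (.ofReal v ^ (p / 2) + 1) :=
    (ENNReal.continuous_const_mul ofReal_ne_top).comp
      ((ENNReal.continuous_rpow_const.comp ENNReal.continuous_ofReal).add continuous_const)
  exact lintegral_le_of_tendsto_ae (fun n => (hX n).aemeasurable.abs.pow_const p |>.ennreal_ofReal)
    (hXY.mono fun ω h => (hcont_moment.tendsto _).comp h) hX_moment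
    ((hcont_bound.tendsto _).comp (tendsto_variance_of_dominated hX hg hXg hXY))

lemma iIndepFun.lintegral_abs_sum_sub_integral_rpow_le {ξ : ι → Ω → ℝ} (hind : iIndepFun ξ μ)
    (hξ : ∀ i, Measurable (ξ i)) (hξ01 : ∀ i ω, ξ i ω ∈ Set.Icc (0 : ℝ) 1) {p : ℝ} (hp : 0 < p)
    (s : Finset ι) :
    ∫⁻ ω, .ofReal (|∑ i ∈ s, (ξ i ω - μ[ξ i])| ^ p) ∂μ
      ≤ .ofReal (momentConst p) * (.ofReal Var[fun ω => ∑ i ∈ s, (ξ i ω - μ[ξ i]); μ] ^ (p / 2)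
        + 1) := by
  have hξ_int : ∀ i, Integrable (ξ i) μ := fun i =>
    .of_mem_Icc 0 1 (hξ i).aemeasurable (ae_of_all _ (hξ01 i))
  have hmean_nonneg : ∀ i, 0 ≤ μ[ξ i] := fun i => integral_nonneg fun ω => (hξ01 i ω).1
  have hmean_le_one : ∀ i, μ[ξ i] ≤ 1 := fun i => by
    simpa using integral_mono (hξ_int i) (integrable_const 1) fun ω => (hξ01 i ω).2
  have hind' : iIndepFun (fun i ω => ξ i ω - μ[ξ i]) μ :=
    hind.comp (fun i (y : ℝ) => y - ∫ ω, ξ i ω ∂μ) fun i => measurable_sub_const _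
  have hcentered := hind'.lintegral_abs_sum_rpow_le (fun i => (hξ i).sub_const _)
    (fun i ω => ?_) (fun i => ?_) hp s
  · rwa [Finset.sum_fn] at hcentered
  · rw [abs_le]
    constructor <;> linarith [(hξ01 i ω).1, (hξ01 i ω).2, hmean_nonneg i, hmean_le_one i]
  · simp [integral_sub (hξ_int i) (integrable_const _)]

lemma iIndepFun.lintegral_abs_tsum_sub_integral_rpow_le [Countable ι] {ξ : ι → Ω → ℝ}
    (hind : iIndepFun ξ μ) (hξ : ∀ i, Measurable (ξ i)) (hξ01 : ∀ i ω, ξ i ω ∈ Set.Icc (0 : ℝ) 1)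
    (hsum : ∑' i, ∫⁻ ω, ‖ξ i ω‖ₑ ∂μ ≠ ∞) {p : ℝ} (hp : 0 < p) :
    ∫⁻ ω, .ofReal (|∑' i, ξ i ω - ∫ x, ∑' i, ξ i x ∂μ| ^ p) ∂μ
      ≤ .ofReal (momentConst p) * (eVar[fun ω => ∑' i, ξ i ω; μ] ^ (p / 2) + 1) := by
  set S : Ω → ℝ := fun ω => ∑' i, ξ i ω
  have hS : Measurable S := Measurable.tsum hξ
  rcases eq_top_or_lt_top eVar[S; μ] with hvar | hvar
  · rw [hvar, top_rpow_of_pos (by positivity), top_add,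
      mul_top (ofReal_pos.2 (momentConst_pos hp)).ne']
    exact le_top
  have hS2 : MemLp S 2 μ := (evariance_lt_top_iff_memLp hS.aestronglyMeasurable).1 hvar
  have hξ_int : ∀ i, Integrable (ξ i) μ := fun i =>
    .of_mem_Icc 0 1 (hξ i).aemeasurable (ae_of_all _ (hξ01 i))
  have hmean : HasSum (fun i => μ[ξ i]) μ[S] :=
    hasSum_integral_of_summable_integral_norm hξ_int <| (ENNReal.summable_toReal hsum).congr
      fun i => (integral_norm_eq_lintegral_enorm (hξ i).aestronglyMeasurable).symm
  have hsummable : ∀ᵐ ω ∂μ, Summable (ξ · ω) := by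
    filter_upwards [summable_norm_of_tsum_eLpNorm_ne_top le_rfl
      (fun i => (hξ i).aestronglyMeasurable)
      (by simpa only [eLpNorm_one_eq_lintegral_enorm] using hsum)] with ω h using h.of_norm
  obtain ⟨F, hF⟩ := exists_seq_tendsto (atTop : Filter (Finset ι))
  set T : ℕ → Ω → ℝ := fun n ω => ∑ i ∈ F n, (ξ i ω - μ[ξ i])
  have hT : ∀ n ω, T n ω = ∑ i ∈ F n, ξ i ω - ∑ i ∈ F n, μ[ξ i] := fun n ω =>
    Finset.sum_sub_distrib ..
  have hT_lim : ∀ᵐ ω ∂μ, Tendsto (T · ω) atTop (𝓝 (S ω - μ[S])) := by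
    filter_upwards [hsummable] with ω h
    exact ((h.hasSum.comp hF).sub (hmean.comp hF)).congr fun n => (hT n ω).symm
  have hmean_nonneg : ∀ i, 0 ≤ μ[ξ i] := fun i => integral_nonneg fun ω => (hξ01 i ω).1
  have hT_le : ∀ n, ∀ᵐ ω ∂μ, |T n ω| ≤ S ω + μ[S] := fun n => by
    filter_upwards [hsummable] with ω h
    have hξ_le := h.sum_le_tsum (F n) fun i _ => (hξ01 i ω).1
    have hmean_le := sum_le_hasSum (F n) (fun i _ => hmean_nonneg i) hmean
    have hξ_nonneg := Finset.sum_nonneg fun i (_ : i ∈ F n) => (hξ01 i ω).1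
    have hmean_sum_nonneg := Finset.sum_nonneg fun i (_ : i ∈ F n) => hmean_nonneg i
    rw [hT, abs_le]
    constructor <;> linarith
  rw [← ofReal_variance hS2, ← variance_sub_const hS.aestronglyMeasurable μ[S]]
  exact lintegral_abs_rpow_le_of_tendsto_of_dominated hp (fun n => by fun_prop)
    (hS2.add (memLp_const _)) hT_le hT_lim
    fun n => hind.lintegral_abs_sum_sub_integral_rpow_le hξ hξ01 hp (F n)

end ProbabilityTheory

/-- Proposition (moment bound for sums of independent Bernoulli variables): for every
`p ≥ 1` there is a constant `γ_p > 0` such that for any countable family `(ξ_i)` of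
independent Bernoulli random variables whose sum `S = Σ_i ξ_i` has finite expectation,
`E[|S - E[S]|^p] ≤ γ_p (Var(S)^{p/2} + 1)`. -/
theorem bernoulli_sum_moment_bound (p : ℝ) (hp : 1 ≤ p) :
    ∃ γ : ℝ, 0 < γ ∧
      ∀ (ι : Type) (_ : Countable ι)
        (Ω : Type) (_ : MeasurableSpace Ω) (P : Measure Ω),
        IsProbabilityMeasure P →
        ∀ ξ : ι → Ω → ℝ,
        (∀ i, Measurable (ξ i)) →
        -- each ξ_i is Bernoulli: it takes values in {0, 1}
        (∀ i ω, ξ i ω = 0 ∨ ξ i ω = 1) →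
        -- the ξ_i are independent
        iIndepFun ξ P →
        -- S = Σ_i ξ_i has finite expectation
        ∀ S : Ω → ℝ, (∀ ω, S ω = ∑' i, ξ i ω) →
        Integrable S P →
        ∫⁻ ω, ENNReal.ofReal (|S ω - ∫ x, S x ∂P| ^ p) ∂P
          ≤ ENNReal.ofReal γ * ((evariance S P) ^ (p / 2) + 1) := by
  have hp0 : 0 < p := by linarith
  refine ⟨momentConst p, momentConst_pos hp0, ?_⟩
  intro ι _ Ω _ P _ ξ hξ h01 hind S hS _
  obtain rfl : S = fun ω => ∑' i, ξ i ω := funext hS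
  by_cases hsum : ∑' i, ∫⁻ ω, ‖ξ i ω‖ₑ ∂P = ∞
  · simp only [lintegral_enorm_eq_measure_preimage_one (hξ _) (h01 _)] at hsum
    have hS0 : (fun ω => ∑' i, ξ i ω) =ᵐ[P] 0 := by
      filter_upwards [hind.ae_not_summable_of_tsum_measure_eq_top hξ hsum] with ω h
      exact tsum_eq_zero_of_not_summable h
    have hmean : ∫ x, ∑' i, ξ i x ∂P = 0 := by simpa using integral_congr_ae hS0
    calc ∫⁻ ω, .ofReal (|∑' i, ξ i ω - ∫ x, ∑' i, ξ i x ∂P| ^ p) ∂P = ∫⁻ _, 0 ∂P :=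
          lintegral_congr_ae (hS0.mono fun ω h => by simp [h, hmean, zero_rpow hp0.ne'])
      _ ≤ _ := by simp
  · refine hind.lintegral_abs_tsum_sub_integral_rpow_le hξ (fun i ω => ?_) hsum hp0
    rcases h01 i ω with h | h <;> simp [h]
end

section
/- For every positive integer d there exists a constant α_d > 0 such that: for any n ≥ 1, any points x_1, …, x_n ∈ ℝ^d, and any positive Borel measure μ on ℝ^d of total mass n which is absolutely continuous with respect to Lebesgue measure with density bounded above by a constant A > 0, one has, for every p ≥ 1, W_p^p( Σ_{i=1}^n δ_{x_i}, μ ) ≥ (α_d)^p · n / A^{p/d}. -/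
open MeasureTheory ENNReal
open Metric

noncomputable section

/-- The `p`-th power of the `p`-Wasserstein distance between two positive Borel
measures on `ℝ^d`: infimum over couplings of the integral of `dist^p`. -/
def WpPow {d : ℕ} (p : ℝ)
    (μ ν : Measure (EuclideanSpace ℝ (Fin d))) : ℝ≥0∞ :=
  ⨅ π ∈ {π : Measure (EuclideanSpace ℝ (Fin d) × EuclideanSpace ℝ (Fin d)) |
      π.map Prod.fst = μ ∧ π.map Prod.snd = ν},
    ∫⁻ z, edist z.1 z.2 ^ p ∂π

/-- Lemma (deterministic lower bound): for every dimension `d` there is `α_d > 0` such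
that for any `n ≥ 1` points `x_1, …, x_n` in `ℝ^d` and any measure `μ` of total mass `n`
with density with respect to Lebesgue measure bounded above by `A > 0`,
`W_p^p(Σ δ_{x_i}, μ) ≥ α_d^p n / A^{p/d}` for every `p ≥ 1`. -/
theorem deterministic_lower_bound (d : ℕ) (hd : 0 < d) :
    ∃ α : ℝ, 0 < α ∧
      ∀ (n : ℕ), 1 ≤ n →
      ∀ (x : Fin n → EuclideanSpace ℝ (Fin d))
        (μ : Measure (EuclideanSpace ℝ (Fin d))),
      μ Set.univ = (n : ℝ≥0∞) →
      ∀ A : ℝ, 0 < A →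
      -- μ is absolutely continuous with density bounded above by A
      (∀ s : Set (EuclideanSpace ℝ (Fin d)), MeasurableSet s →
        μ s ≤ ENNReal.ofReal A * volume s) →
      ∀ p : ℝ, 1 ≤ p →
      ENNReal.ofReal (α ^ p * n / A ^ (p / d))
        ≤ WpPow p (∑ i : Fin n, Measure.dirac (x i)) μ := by
  haveI : Nonempty (Fin d) := ⟨⟨0, hd⟩⟩
  have hd0 : (d : ℝ) ≠ 0 := Nat.cast_ne_zero.mpr hd.ne'
  set cd : ℝ := (volume (ball (0 : EuclideanSpace ℝ (Fin d)) 1)).toReal with hcd_def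
  have hcd : 0 < cd :=
    ENNReal.toReal_pos (measure_ball_pos volume _ one_pos).ne' measure_ball_lt_top.ne
  set c : ℝ := ((2 * cd)⁻¹) ^ ((d : ℝ)⁻¹) with hc_def
  have hc : 0 < c := Real.rpow_pos_of_pos (by positivity) _
  refine ⟨min c 1 / 2, by positivity, ?_⟩
  intro n hn x μ hμtot A hA hdens p hp
  have hp0 : (0 : ℝ) ≤ p := le_trans zero_le_one hp
  set r : ℝ := c * A ^ (-(d : ℝ)⁻¹) with hr_def
  have hr : 0 < r := mul_pos hc (Real.rpow_pos_of_pos hA _)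
  -- key real computation : A * r^d * cd = 1/2
  have hrd : A * r ^ d * cd = 1 / 2 := by
    have : (r : ℝ) ^ (d : ℕ) = (2 * cd)⁻¹ * A⁻¹ := by
      rw [← Real.rpow_natCast r d, hr_def, Real.mul_rpow hc.le (Real.rpow_pos_of_pos hA _).le,
        hc_def, ← Real.rpow_mul (by positivity), ← Real.rpow_mul hA.le,
        inv_mul_cancel₀ hd0, Real.rpow_one, neg_mul, inv_mul_cancel₀ hd0, Real.rpow_neg_one]
    rw [this]; field_simp
  -- lower bound each coupling
  rw [WpPow]
  refine le_iInf₂ fun π hπ => ?_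
  obtain ⟨hπ1, hπ2⟩ := hπ
  set S : Set (EuclideanSpace ℝ (Fin d)) := ⋃ i, ball (x i) r with hS_def
  have hSm : MeasurableSet S := MeasurableSet.iUnion fun i => measurableSet_ball
  -- μ S ≤ n / 2
  have hvolS : volume S ≤ (n : ℝ≥0∞) * (ENNReal.ofReal (r ^ d) *
      volume (ball (0 : EuclideanSpace ℝ (Fin d)) 1)) := by
    refine le_trans (measure_iUnion_le _) ?_
    rw [tsum_fintype]
    have : ∀ i : Fin n, volume (ball (x i) r)
        = ENNReal.ofReal (r ^ d) * volume (ball (0 : EuclideanSpace ℝ (Fin d)) 1) := by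
      intro i
      rw [Measure.addHaar_ball volume (x i) hr.le, finrank_euclideanSpace_fin]
    simp [this, Finset.sum_const]
  have hμS : μ S ≤ (n : ℝ≥0∞) / 2 := by
    refine le_trans (hdens S hSm) ?_
    calc ENNReal.ofReal A * volume S
        ≤ ENNReal.ofReal A * ((n : ℝ≥0∞) * (ENNReal.ofReal (r ^ d) *
            volume (ball (0 : EuclideanSpace ℝ (Fin d)) 1))) :=
          mul_le_mul_right hvolS _
      _ = (n : ℝ≥0∞) * ENNReal.ofReal (A * r ^ d * cd) := by
          rw [← ENNReal.ofReal_toReal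
            (measure_ball_lt_top (x := (0 : EuclideanSpace ℝ (Fin d))) (r := 1)).ne, ← hcd_def,
            ← ENNReal.ofReal_mul (by positivity), mul_assoc A, ENNReal.ofReal_mul hA.le]
          ring
      _ = (n : ℝ≥0∞) / 2 := by
          rw [hrd, ENNReal.ofReal_div_of_pos two_pos, ENNReal.ofReal_one,
            ENNReal.ofReal_ofNat, ENNReal.div_eq_inv_mul, ENNReal.div_eq_inv_mul]
          ring
  -- μ Sᶜ ≥ n / 2
  have hμSc : (n : ℝ≥0∞) / 2 ≤ μ Sᶜ := by
    have h1 : μ Sᶜ = (n : ℝ≥0∞) - μ S := by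
      rw [measure_compl hSm (lt_of_le_of_lt (measure_mono (Set.subset_univ S))
        (by rw [hμtot]; exact ENNReal.natCast_lt_top n)).ne, hμtot]
    rw [h1]
    calc (n : ℝ≥0∞) / 2 = (n : ℝ≥0∞) - (n : ℝ≥0∞) / 2 := by
          rw [ENNReal.sub_half (ENNReal.natCast_ne_top n)]
      _ ≤ (n : ℝ≥0∞) - μ S := tsub_le_tsub_left hμS _
  -- the bad set where the first coordinate is not one of the x i has π-measure zero
  have hrange : MeasurableSet (Set.range x) := (Set.finite_range x).measurableSet
  have hbad : π ((Set.range x)ᶜ ×ˢ (Set.univ : Set (EuclideanSpace ℝ (Fin d)))) = 0 := by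
    have : (Set.range x)ᶜ ×ˢ (Set.univ : Set (EuclideanSpace ℝ (Fin d)))
        = Prod.fst ⁻¹' (Set.range x)ᶜ := by
      ext z; simp [Set.mem_prod]
    rw [this, ← Measure.map_apply measurable_fst hrange.compl, hπ1]
    rw [show ((∑ i : Fin n, Measure.dirac (x i)) (Set.range x)ᶜ)
        = ∑ i : Fin n, Measure.dirac (x i) (Set.range x)ᶜ from
      by rw [Measure.finset_sum_apply]]
    refine Finset.sum_eq_zero fun i _ => ?_
    rw [Measure.dirac_apply' _ hrange.compl]
    simp [Set.indicator_of_notMem, Set.mem_range_self i]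
  -- the good set
  set T : Set (EuclideanSpace ℝ (Fin d) × EuclideanSpace ℝ (Fin d)) :=
    Set.range x ×ˢ Sᶜ with hT_def
  have hTm : MeasurableSet T := hrange.prod hSm.compl
  have hπT : (n : ℝ≥0∞) / 2 ≤ π T := by
    have hdiff : T = (Prod.snd ⁻¹' Sᶜ) \
        ((Set.range x)ᶜ ×ˢ (Set.univ : Set (EuclideanSpace ℝ (Fin d)))) := by
      ext z
      simp only [hT_def, Set.mem_prod, Set.mem_diff, Set.mem_preimage, Set.mem_compl_iff,
        Set.mem_univ, and_true]
      tauto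
    rw [hdiff, measure_diff_null hbad, ← Measure.map_apply measurable_snd hSm.compl, hπ2]
    exact hμSc
  -- lower bound the integral
  have hlow : ENNReal.ofReal r ^ p * ((n : ℝ≥0∞) / 2) ≤ ∫⁻ z, edist z.1 z.2 ^ p ∂π := by
    calc ENNReal.ofReal r ^ p * ((n : ℝ≥0∞) / 2)
        ≤ ENNReal.ofReal r ^ p * π T := mul_le_mul_right hπT _
      _ = ∫⁻ _ in T, ENNReal.ofReal r ^ p ∂π := (setLIntegral_const T _).symm
      _ ≤ ∫⁻ z in T, edist z.1 z.2 ^ p ∂π := by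
          refine setLIntegral_mono' hTm fun z hz => ?_
          obtain ⟨⟨i, hi⟩, hz2⟩ := hz
          refine ENNReal.rpow_le_rpow ?_ hp0
          rw [edist_dist, ← hi]
          refine ENNReal.ofReal_le_ofReal ?_
          have : z.2 ∉ ball (x i) r := fun h => hz2 (Set.mem_iUnion.mpr ⟨i, h⟩)
          rw [mem_ball, dist_comm] at this
          exact le_of_not_gt this
      _ ≤ ∫⁻ z, edist z.1 z.2 ^ p ∂π := setLIntegral_le_lintegral T _
  refine le_trans ?_ hlow
  -- final arithmetic
  have hrw : ENNReal.ofReal (r ^ p * (n / 2))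
      = ENNReal.ofReal r ^ p * ((n : ℝ≥0∞) / 2) := by
    rw [ENNReal.ofReal_mul (by positivity : (0:ℝ) ≤ r ^ p),
      ← ENNReal.ofReal_rpow_of_pos hr,
      ENNReal.ofReal_div_of_pos two_pos, ENNReal.ofReal_natCast, ENNReal.ofReal_ofNat]
  rw [← hrw]
  refine ENNReal.ofReal_le_ofReal ?_
  have hApd : (0 : ℝ) < A ^ (p / d) := Real.rpow_pos_of_pos hA _
  have hrp : r ^ p = c ^ p / A ^ (p / (d:ℝ)) := by
    rw [hr_def, Real.mul_rpow hc.le (Real.rpow_pos_of_pos hA _).le,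
      ← Real.rpow_mul hA.le, show -(d:ℝ)⁻¹ * p = -(p / (d:ℝ)) by ring,
      Real.rpow_neg hA.le]
    exact (div_eq_mul_inv _ _).symm
  rw [hrp]
  have hmin : ((min c 1) / 2 : ℝ) ^ p ≤ c ^ p / 2 := by
    rw [Real.div_rpow (le_min hc.le zero_le_one) (by norm_num : (0:ℝ) ≤ 2)]
    refine div_le_div₀ (by positivity) (Real.rpow_le_rpow (by positivity) (min_le_left _ _) hp0)
      two_pos ?_
    calc (2:ℝ) = 2 ^ (1:ℝ) := (Real.rpow_one 2).symm
      _ ≤ 2 ^ p := Real.rpow_le_rpow_of_exponent_le one_le_two hp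
  calc (min c 1 / 2) ^ p * (n:ℝ) / A ^ (p / (d:ℝ))
      ≤ (c ^ p / 2) * (n:ℝ) / A ^ (p / (d:ℝ)) := by gcongr
    _ = c ^ p / A ^ (p / (d:ℝ)) * ((n:ℝ) / 2) := by ring
end
end

section
/- Let d ≥ 1 be an integer, n ≥ 1, x_1, …, x_n ∈ ℝ^d, and let μ be a positive Borel measure on ℝ^d of total mass n with density with respect to Lebesgue measure bounded above by A > 0. Then W_1( Σ_{i=1}^n δ_{x_i}, μ ) ≥ n · (d/(A·σ_{d−1}))^{1/d} · d/(d+1), where σ_{d−1} = d·ω_d is the (d−1)-dimensional surface measure of the unit sphere in ℝ^d and ω_d is the Lebesgue measure of the unit ball. -/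
open MeasureTheory ENNReal

noncomputable section

/-- The `1`-Wasserstein distance between two positive Borel measures on `ℝ^d`:
infimum over couplings of the integral of the distance. -/
def W1 {d : ℕ} (μ ν : Measure (EuclideanSpace ℝ (Fin d))) : ℝ≥0∞ :=
  ⨅ π ∈ {π : Measure (EuclideanSpace ℝ (Fin d) × EuclideanSpace ℝ (Fin d)) |
      π.map Prod.fst = μ ∧ π.map Prod.snd = ν},
    ∫⁻ z, edist z.1 z.2 ∂π

/-!
Let `S = {x_1, …, x_n}`. Every coupling moves mass at `y` from some point of `S`, so its cost is
at least `∫ dist(y, S) dμ(y)`. The sublevel set `{dist(·, S) ≤ t}` is covered by `n` balls of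
radius `t`, so the density bound gives `μ {dist(·, S) > t} ≥ n (1 - A ω_d t^d)`. Integrating this
over `0 < t ≤ R`, where `A ω_d R^d = 1`, in the layer-cake formula yields `n R d/(d+1)`.
-/

open Metric Set Module

theorem ae_mem_range_sum_dirac {ι X : Type*} [Fintype ι] [MeasurableSpace X]
    [MeasurableSingletonClass X] (x : ι → X) :
    ∀ᵐ y ∂(∑ i, Measure.dirac (x i)), y ∈ range x := by
  rw [← Measure.sum_fintype, Measure.ae_sum_iff]
  intro i
  rw [ae_dirac_eq]
  exact mem_range_self i

theorem lintegral_ofReal_infDist_le_lintegral_edist {X : Type*} [PseudoMetricSpace X]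
    [MeasurableSpace X] [OpensMeasurableSpace X] {μ ν : Measure X} {π : Measure (X × X)}
    (hfst : π.map Prod.fst = μ) (hsnd : π.map Prod.snd = ν) {S : Set X}
    (hS : ∀ᵐ x ∂μ, x ∈ S) :
    ∫⁻ y, ENNReal.ofReal (infDist y S) ∂ν ≤ ∫⁻ z, edist z.1 z.2 ∂π := by
  have hS' : ∀ᵐ z ∂π, z.1 ∈ S := ae_of_ae_map measurable_fst.aemeasurable (hfst ▸ hS)
  rw [← hsnd, lintegral_map (continuous_infDist_pt S).measurable.ennreal_ofReal measurable_snd]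
  refine lintegral_mono_ae (hS'.mono fun z hz => ?_)
  rw [edist_dist, dist_comm]
  exact ENNReal.ofReal_le_ofReal (infDist_le_dist_of_mem hz)

theorem setLIntegral_Ioc_le_lintegral_ofReal {α : Type*} [MeasurableSpace α] {ν : Measure α}
    {f : α → ℝ} (hf_nn : 0 ≤ᵐ[ν] f) (hf : AEMeasurable f ν) {φ : ℝ → ℝ≥0∞} {R : ℝ}
    (hφ : ∀ t ∈ Ioc 0 R, φ t ≤ ν {y | t < f y}) :
    ∫⁻ t in Ioc 0 R, φ t ≤ ∫⁻ y, ENNReal.ofReal (f y) ∂ν := by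
  rw [lintegral_eq_lintegral_meas_lt ν hf_nn hf]
  calc ∫⁻ t in Ioc 0 R, φ t ≤ ∫⁻ t in Ioc 0 R, ν {y | t < f y} :=
        setLIntegral_mono' measurableSet_Ioc hφ
    _ ≤ ∫⁻ t in Ioi 0, ν {y | t < f y} := lintegral_mono_set Ioc_subset_Ioi_self

theorem setLIntegral_Ioc_ofReal_mul_one_sub_mul_pow {m c R : ℝ} {d : ℕ} (hm : 0 ≤ m)
    (hc : 0 ≤ c) (hR : 0 ≤ R) (hcR : c * R ^ d = 1) :
    ∫⁻ t in Ioc 0 R, ENNReal.ofReal (m * (1 - c * t ^ d)) =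
      ENNReal.ofReal (m * R * (d / (d + 1))) := by
  have h_nn : ∀ t ∈ Ioc 0 R, 0 ≤ m * (1 - c * t ^ d) := fun t ht => by
    have : c * t ^ d ≤ c * R ^ d := by gcongr; exacts [ht.1.le, ht.2]
    nlinarith
  have h_int : IntegrableOn (fun t : ℝ => m * (1 - c * t ^ d)) (Ioc 0 R) :=
    (by fun_prop : Continuous fun t : ℝ => m * (1 - c * t ^ d)).integrableOn_Icc.mono_set
      Ioc_subset_Icc_self
  rw [← ofReal_integral_eq_lintegral_ofReal h_int
    ((ae_restrict_iff' measurableSet_Ioc).2 (ae_of_all _ h_nn)),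
    ← intervalIntegral.integral_of_le hR]
  congr 1
  simp only [intervalIntegral.integral_const_mul]
  rw [intervalIntegral.integral_sub intervalIntegrable_const
      ((intervalIntegral.intervalIntegrable_pow d).const_mul _),
    intervalIntegral.integral_const, intervalIntegral.integral_const_mul, integral_pow]
  have hcR' : c * R ^ (d + 1) = R := by rw [pow_succ, ← mul_assoc, hcR, one_mul]
  rw [smul_eq_mul, mul_one, zero_pow d.succ_ne_zero, sub_zero, sub_zero, mul_div_assoc',
    hcR']
  field_simp
  ring

section AddHaar

variable {E : Type*} [NormedAddCommGroup E] [NormedSpace ℝ E] [FiniteDimensional ℝ E]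
  [MeasurableSpace E] [BorelSpace E] (μ₀ : Measure E) [μ₀.IsAddHaarMeasure]
  {ι : Type*} [Fintype ι] [Nonempty ι] (x : ι → E) {ν : Measure E} {A : ℝ}

theorem measure_infDist_range_le (hA : 0 ≤ A)
    (hν : ∀ s, MeasurableSet s → ν s ≤ ENNReal.ofReal A * μ₀ s) {t : ℝ} (ht : 0 ≤ t) :
    ν {y | infDist y (range x) ≤ t} ≤
      ENNReal.ofReal (Fintype.card ι * (A * (μ₀ (ball 0 1)).toReal * t ^ finrank ℝ E)) := by
  have h_sub : {y | infDist y (range x) ≤ t} ⊆ ⋃ i, closedBall (x i) t := fun y hy => by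
    obtain ⟨_, ⟨i, rfl⟩, hi⟩ :=
      (finite_range x).isCompact.exists_infDist_eq_dist (range_nonempty x) y
    exact mem_iUnion.2 ⟨i, mem_closedBall.2 (hi ▸ hy)⟩
  calc ν {y | infDist y (range x) ≤ t} ≤ ∑ i, ν (closedBall (x i) t) :=
        (measure_mono h_sub).trans (measure_iUnion_fintype_le _ _)
    _ ≤ ∑ i, ENNReal.ofReal A * μ₀ (closedBall (x i) t) :=
        Finset.sum_le_sum fun i _ => hν _ measurableSet_closedBall
    _ = _ := by
        simp only [Measure.addHaar_closedBall μ₀ _ ht, Finset.sum_const, Finset.card_univ,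
          nsmul_eq_mul]
        rw [ofReal_mul (Nat.cast_nonneg _), ofReal_mul (mul_nonneg hA toReal_nonneg),
          ofReal_mul hA, ofReal_toReal measure_ball_lt_top.ne, ofReal_natCast]
        ring

theorem ofReal_le_measure_lt_infDist_range (hA : 0 ≤ A) (hmass : ν univ = Fintype.card ι)
    (hν : ∀ s, MeasurableSet s → ν s ≤ ENNReal.ofReal A * μ₀ s) {t : ℝ} (ht : 0 ≤ t) :
    ENNReal.ofReal (Fintype.card ι * (1 - A * (μ₀ (ball 0 1)).toReal * t ^ finrank ℝ E)) ≤
      ν {y | t < infDist y (range x)} := by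
  have h_meas : MeasurableSet {y | infDist y (range x) ≤ t} :=
    measurableSet_le (continuous_infDist_pt _).measurable measurable_const
  have h_compl : {y | t < infDist y (range x)} = {y | infDist y (range x) ≤ t}ᶜ := by
    ext y; simp [not_le]
  have h_fin : ν {y | infDist y (range x) ≤ t} ≠ ∞ :=
    measure_ne_top_of_subset (subset_univ _) (hmass ▸ natCast_ne_top _)
  rw [h_compl, measure_compl h_meas h_fin, hmass]
  calc _ = (Fintype.card ι : ℝ≥0∞) - ENNReal.ofReal
          (Fintype.card ι * (A * (μ₀ (ball 0 1)).toReal * t ^ finrank ℝ E)) := by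
        rw [← ofReal_natCast, ← ofReal_sub _ (by positivity), mul_one_sub]
    _ ≤ _ := tsub_le_tsub_left (measure_infDist_range_le μ₀ x hA hν ht) _

end AddHaar

theorem W1_lower_bound_general (d : ℕ) (n : ℕ)
    (x : Fin n → EuclideanSpace ℝ (Fin d))
    (μ : Measure (EuclideanSpace ℝ (Fin d)))
    (hmass : μ Set.univ = (n : ℝ≥0∞))
    (A : ℝ) (hA : 0 < A)
    -- μ has density with respect to Lebesgue measure bounded above by A
    (hdens : ∀ s : Set (EuclideanSpace ℝ (Fin d)), MeasurableSet s →
      μ s ≤ ENNReal.ofReal A * volume s) :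
    ENNReal.ofReal (n *
        (d / (A * (d * (volume (Metric.ball (0 : EuclideanSpace ℝ (Fin d)) 1)).toReal)))
          ^ ((1 : ℝ) / d) * (d / (d + 1)))
      ≤ W1 (∑ i : Fin n, Measure.dirac (x i)) μ := by
  rcases Nat.eq_zero_or_pos d with rfl | hd
  · simp
  rcases Nat.eq_zero_or_pos n with rfl | hn
  · simp
  have : Nonempty (Fin n) := ⟨⟨0, hn⟩⟩
  set ω := (volume (ball (0 : EuclideanSpace ℝ (Fin d)) 1)).toReal
  have hω : 0 < ω := toReal_pos (measure_ball_pos volume _ one_pos).ne' measure_ball_lt_top.ne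
  set R := (d / (A * (d * ω))) ^ ((1 : ℝ) / d)
  have hR : 0 ≤ R := by positivity
  have hRd : A * ω * R ^ d = 1 := by
    rw [← Real.rpow_natCast, ← Real.rpow_mul (by positivity), one_div_mul_cancel (by positivity),
      Real.rpow_one]
    field_simp
  refine le_iInf₂ fun π ⟨hfst, hsnd⟩ => ?_
  have h_level (t : ℝ) (ht : t ∈ Ioc 0 R) :
      ENNReal.ofReal (n * (1 - A * ω * t ^ d)) ≤ μ {y | t < infDist y (range x)} := by
    simpa using
      ofReal_le_measure_lt_infDist_range volume x hA.le (by simpa using hmass) hdens ht.1.le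
  calc _ = ∫⁻ t in Ioc 0 R, ENNReal.ofReal (n * (1 - A * ω * t ^ d)) :=
        (setLIntegral_Ioc_ofReal_mul_one_sub_mul_pow n.cast_nonneg (by positivity) hR hRd).symm
    _ ≤ ∫⁻ y, ENNReal.ofReal (infDist y (range x)) ∂μ :=
        setLIntegral_Ioc_le_lintegral_ofReal (ae_of_all _ fun _ => infDist_nonneg)
          (continuous_infDist_pt _).aemeasurable h_level
    _ ≤ ∫⁻ z, edist z.1 z.2 ∂π :=
        lintegral_ofReal_infDist_le_lintegral_edist hfst hsnd (ae_mem_range_sum_dirac x)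

/-- Lemma (explicit `W₁` lower bound): for `d ≥ 1`, `n ≥ 1`, points `x_1, …, x_n ∈ ℝ^d`
and a measure `μ` of total mass `n` with density bounded above by `A > 0`,
`W_1(Σ δ_{x_i}, μ) ≥ n (d/(A σ_{d-1}))^{1/d} d/(d+1)`, where `σ_{d-1} = d ω_d` and `ω_d`
is the Lebesgue measure of the unit ball in `ℝ^d`. -/
theorem W1_lower_bound (d : ℕ) (hd : 1 ≤ d) (n : ℕ) (hn : 1 ≤ n)
    (x : Fin n → EuclideanSpace ℝ (Fin d))
    (μ : Measure (EuclideanSpace ℝ (Fin d)))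
    (hmass : μ Set.univ = (n : ℝ≥0∞))
    (A : ℝ) (hA : 0 < A)
    -- μ has density with respect to Lebesgue measure bounded above by A
    (hdens : ∀ s : Set (EuclideanSpace ℝ (Fin d)), MeasurableSet s →
      μ s ≤ ENNReal.ofReal A * volume s) :
    ENNReal.ofReal (n *
        (d / (A * (d * (volume (Metric.ball (0 : EuclideanSpace ℝ (Fin d)) 1)).toReal)))
          ^ ((1 : ℝ) / d) * (d / (d + 1)))
      ≤ W1 (∑ i : Fin n, Measure.dirac (x i)) μ :=
  W1_lower_bound_general d n x μ hmass A hA hdens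
end
end

section
/- Fix p ≥ 1. Let μ and ν be finite positive Borel measures on ℝ^d and let (B_i)_{i∈I} be a countable measurable partition of a set containing the supports of μ and ν, such that μ(B_i) = ν(B_i) for every i. Then W_p^p(μ, ν) ≤ Σ_{i∈I} W_p^p( μ|_{B_i}, ν|_{B_i} ), where μ|_B denotes the restriction of μ to B. -/
open MeasureTheory ENNReal

noncomputable section

/-! Couplings can be glued along a countable sum: choosing an almost optimal coupling
for each pair `(μ i, ν i)`, with errors `ε i` summing to at most `ε`, their sum is a
coupling of `Σ μ i` and `Σ ν i` whose cost is the sum of the costs. -/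

theorem MeasureTheory.Measure.sum_restrict_of_measure_compl_iUnion_eq_zero
    {α ι : Type*} [MeasurableSpace α] [Countable ι] {μ : Measure α} {s : ι → Set α}
    (hd : Pairwise (Function.onFun Disjoint s)) (hm : ∀ i, MeasurableSet (s i))
    (h : μ (⋃ i, s i)ᶜ = 0) :
    Measure.sum (fun i => μ.restrict (s i)) = μ := by
  rw [← Measure.restrict_iUnion hd hm]
  exact Measure.restrict_eq_self_of_ae_mem (ae_iff.mpr h)

section WpPow

variable {d : ℕ} {p : ℝ}

theorem WpPow_le_lintegral {μ ν : Measure (EuclideanSpace ℝ (Fin d))}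
    {π : Measure (EuclideanSpace ℝ (Fin d) × EuclideanSpace ℝ (Fin d))}
    (hfst : π.map Prod.fst = μ) (hsnd : π.map Prod.snd = ν) :
    WpPow p μ ν ≤ ∫⁻ z, edist z.1 z.2 ^ p ∂π :=
  iInf₂_le π ⟨hfst, hsnd⟩

theorem exists_coupling_lintegral_lt_of_WpPow_lt
    {μ ν : Measure (EuclideanSpace ℝ (Fin d))} {c : ℝ≥0∞} (h : WpPow p μ ν < c) :
    ∃ π : Measure (EuclideanSpace ℝ (Fin d) × EuclideanSpace ℝ (Fin d)),
      π.map Prod.fst = μ ∧ π.map Prod.snd = ν ∧ ∫⁻ z, edist z.1 z.2 ^ p ∂π < c := by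
  obtain ⟨π, hπ⟩ := iInf_lt_iff.mp h
  obtain ⟨⟨hfst, hsnd⟩, hlt⟩ := iInf_lt_iff.mp hπ
  exact ⟨π, hfst, hsnd, hlt⟩

theorem WpPow_sum_le {ι : Type*} [Countable ι] (μ ν : ι → Measure (EuclideanSpace ℝ (Fin d))) :
    WpPow p (Measure.sum μ) (Measure.sum ν) ≤ ∑' i, WpPow p (μ i) (ν i) := by
  refine ENNReal.le_of_forall_pos_le_add fun ε hε hfin => ?_
  obtain ⟨ε', hε'pos, hε'sum⟩ :=
    ENNReal.exists_pos_sum_of_countable' (ε := (ε : ℝ≥0∞)) (by exact_mod_cast hε.ne') ι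
  have hnear : ∀ i, WpPow p (μ i) (ν i) < WpPow p (μ i) (ν i) + ε' i := fun i =>
    ENNReal.lt_add_right (ne_top_of_le_ne_top hfin.ne (ENNReal.le_tsum i)) (hε'pos i).ne'
  choose π hfst hsnd hcost using fun i => exists_coupling_lintegral_lt_of_WpPow_lt (hnear i)
  have hsum_fst : (Measure.sum π).map Prod.fst = Measure.sum μ := by
    simp only [Measure.map_sum measurable_fst.aemeasurable, hfst]
  have hsum_snd : (Measure.sum π).map Prod.snd = Measure.sum ν := by
    simp only [Measure.map_sum measurable_snd.aemeasurable, hsnd]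
  calc WpPow p (Measure.sum μ) (Measure.sum ν)
      ≤ ∫⁻ z, edist z.1 z.2 ^ p ∂(Measure.sum π) := WpPow_le_lintegral hsum_fst hsum_snd
    _ = ∑' i, ∫⁻ z, edist z.1 z.2 ^ p ∂(π i) := lintegral_sum_measure _ _
    _ ≤ ∑' i, (WpPow p (μ i) (ν i) + ε' i) := ENNReal.tsum_le_tsum fun i => (hcost i).le
    _ = ∑' i, WpPow p (μ i) (ν i) + ∑' i, ε' i := ENNReal.tsum_add
    _ ≤ ∑' i, WpPow p (μ i) (ν i) + ε := add_le_add_right hε'sum.le _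

end WpPow

theorem wasserstein_partition_subadditive_general (p : ℝ) (d : ℕ)
    (μ ν : Measure (EuclideanSpace ℝ (Fin d)))
    (ι : Type) (hι : Countable ι)
    (B : ι → Set (EuclideanSpace ℝ (Fin d)))
    (hmeas : ∀ i, MeasurableSet (B i))
    (hdisj : Pairwise (Function.onFun Disjoint B))
    -- the union of the `B i` carries both `μ` and `ν`
    (hμsupp : μ (⋃ i, B i)ᶜ = 0) (hνsupp : ν (⋃ i, B i)ᶜ = 0) :
    WpPow p μ ν ≤ ∑' i, WpPow p (μ.restrict (B i)) (ν.restrict (B i)) := by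
  have := hι
  calc WpPow p μ ν
      = WpPow p (Measure.sum fun i => μ.restrict (B i))
          (Measure.sum fun i => ν.restrict (B i)) := by
        rw [Measure.sum_restrict_of_measure_compl_iUnion_eq_zero hdisj hmeas hμsupp,
          Measure.sum_restrict_of_measure_compl_iUnion_eq_zero hdisj hmeas hνsupp]
    _ ≤ ∑' i, WpPow p (μ.restrict (B i)) (ν.restrict (B i)) := WpPow_sum_le _ _

/-- Subadditivity of the transport cost over a countable measurable partition: if
`(B_i)` is a countable measurable partition of a set carrying both `μ` and `ν`, and
`μ(B_i) = ν(B_i)` for every `i`, then `W_p^p(μ, ν) ≤ Σ_i W_p^p(μ|_{B_i}, ν|_{B_i})`. -/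
theorem wasserstein_partition_subadditive (p : ℝ) (hp : 1 ≤ p) (d : ℕ)
    (μ ν : Measure (EuclideanSpace ℝ (Fin d)))
    (hμfin : IsFiniteMeasure μ) (hνfin : IsFiniteMeasure ν)
    (ι : Type) (hι : Countable ι)
    (B : ι → Set (EuclideanSpace ℝ (Fin d)))
    (hmeas : ∀ i, MeasurableSet (B i))
    (hdisj : Pairwise (Function.onFun Disjoint B))
    -- the union of the `B i` carries both `μ` and `ν`
    (hμsupp : μ (⋃ i, B i)ᶜ = 0) (hνsupp : ν (⋃ i, B i)ᶜ = 0)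
    (hmass : ∀ i, μ (B i) = ν (B i)) :
    WpPow p μ ν ≤ ∑' i, WpPow p (μ.restrict (B i)) (ν.restrict (B i)) :=
  wasserstein_partition_subadditive_general p d μ ν ι hι B hmeas hdisj hμsupp hνsupp
end
end
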